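/- arXiv:1111.2778 — 2 statements merged into one kernel-verified Lean document; each statement's English description precedes it below -/
import Mathlib

section
/- Let C be any d-dimensional copula, C^#(s,u) = s·C(u) on [0,1]^{d+1}, and define Ψ(H^#)(s,u) = H^#(s, H⁻(u)) − s·H(H⁻(u)), where H(u) = H^#(1,u), H⁻(u) = (H₁⁻(u₁),...,H_d⁻(u_d)), for H^# ∈ ℓ^∞([0,1]^{d+1}) such that H is a distribution function on [0,1]^d with marginals vanishing at 0. Then Ψ is Hadamard-differentiable at C^# (tangentially to all of ℓ^∞, i.e., fully), with derivative Ψ'_{C^#}(α^#)(s,u) = α^#(s,u) − s·α^#(1,u), valid for all uniformly continuous bounded α^#. -/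
open MeasureTheory Set Filter

/-- A `d`-dimensional copula. -/
def IsCopula (d : ℕ) (C : (Fin d → ℝ) → ℝ) : Prop :=
  ∃ μ : Measure (Fin d → ℝ), IsProbabilityMeasure μ ∧
    (∀ p : Fin d, ∀ t ∈ Icc (0:ℝ) 1, μ {x | x p ≤ t} = ENNReal.ofReal t) ∧
    (∀ u, C u = (μ {x | ∀ p, x p ≤ u p}).toReal)

/-- The unit cube `[0,1]^d`. -/
def cube (d : ℕ) : Set (Fin d → ℝ) := Set.univ.pi fun _ => Icc 0 1

/-- `x^{(p)}`: all coordinates `1` except the `p`-th, which is `x`. -/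
def margVec {d : ℕ} (p : Fin d) (s : ℝ) : Fin d → ℝ := Function.update (fun _ => 1) p s

/-! Since `C` has uniform marginals, the `p`-th marginal of `H = C + tₙ αₙ^#(1,·)` is within
`|tₙ| ‖αₙ^#(1,·)‖_∞` of the identity, and hence so is its generalized inverse: `u ↦ H⁻(u)`
converges uniformly to the identity on the cube. As `C^#(s,u) = s C(u)`, the difference quotient
of `Ψ` at `(s,u)` is exactly `αₙ^#(s, H⁻(u)) − s αₙ^#(1, H⁻(u))`; uniform convergence of `αₙ^#`
and uniform continuity of `α^#` make it converge uniformly to `α^#(s,u) − s α^#(1,u)`. -/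

section UniformConvergence

variable {ι α : Type*} {p : Filter ι} {s : Set α}

theorem TendstoUniformlyOn.comp_of_tendstoUniformlyOn_id {β : Type*} [UniformSpace α]
    [UniformSpace β] {F : ι → α → β} {f : α → β} {G : ι → α → α}
    (hF : TendstoUniformlyOn F f p s) (hf : UniformContinuousOn f s)
    (hG : TendstoUniformlyOn G id p s) (hGs : ∀ᶠ i in p, MapsTo (G i) s s) :
    TendstoUniformlyOn (fun i x => F i (G i x)) f p s := by
  intro u hu
  obtain ⟨v, hv, hvu⟩ := comp_mem_uniformity_sets hu
  have hfG := hf.comp_tendstoUniformlyOn_eventually hGs (fun _ hx => hx) hG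
  filter_upwards [hfG v hv, hF v hv, hGs] with i hfGi hFi hGi x hx
  exact hvu ⟨f (G i x), hfGi x hx, hFi _ (hGi hx)⟩

theorem TendstoUniformlyOn.mul_left_of_abs_le {F : ι → α → ℝ} {f a : α → ℝ} {M : ℝ}
    (hF : TendstoUniformlyOn F f p s) (ha : ∀ x ∈ s, |a x| ≤ M) :
    TendstoUniformlyOn (fun i x => a x * F i x) (fun x => a x * f x) p s := by
  refine Metric.tendstoUniformlyOn_iff.2 fun ε hε => ?_
  have hM : 0 < |M| + 1 := by positivity
  filter_upwards [Metric.tendstoUniformlyOn_iff.1 hF (ε / (|M| + 1)) (by positivity)]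
    with i hi x hx
  have hdist := hi x hx
  rw [Real.dist_eq] at hdist ⊢
  calc |a x * f x - a x * F i x| = |a x| * |f x - F i x| := by rw [← mul_sub, abs_mul]
    _ ≤ (|M| + 1) * |f x - F i x| := by
        gcongr; linarith [ha x hx, le_abs_self M]
    _ < (|M| + 1) * (ε / (|M| + 1)) := by gcongr
    _ = ε := by field_simp

theorem TendstoUniformlyOn.const_mul_of_tendsto_zero {F : ι → α → ℝ} {f : α → ℝ} {c : ι → ℝ}
    {M : ℝ} (hF : TendstoUniformlyOn F f p s) (hf : ∀ x ∈ s, |f x| ≤ M)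
    (hc : Tendsto c p (nhds 0)) :
    TendstoUniformlyOn (fun i x => c i * F i x) 0 p s := by
  have hFM : ∀ᶠ i in p, ∀ x ∈ s, |F i x| ≤ M + 1 := by
    filter_upwards [Metric.tendstoUniformlyOn_iff.1 hF 1 one_pos] with i hi x hx
    have hdist := hi x hx
    rw [Real.dist_eq] at hdist
    linarith [hf x hx, abs_sub_abs_le_abs_sub (F i x) (f x), abs_sub_comm (F i x) (f x)]
  have hcM : Tendsto (fun i => |c i| * (M + 1)) p (nhds 0) := by
    simpa using hc.abs.mul_const (M + 1)
  refine Metric.tendstoUniformlyOn_iff.2 fun ε hε => ?_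
  filter_upwards [hFM, hcM.eventually (gt_mem_nhds hε)] with i hi hci x hx
  rw [Pi.zero_apply, dist_zero_left, Real.norm_eq_abs, abs_mul]
  exact (mul_le_mul_of_nonneg_left (hi x hx) (abs_nonneg _)).trans_lt hci

theorem TendstoUniformlyOn.tendsto_iSup_abs_sub {F : ι → α → ℝ} {f : α → ℝ}
    (hF : TendstoUniformlyOn F f p s) :
    Tendsto (fun i => ⨆ x : s, |F i x - f x|) p (nhds 0) := by
  refine Metric.tendsto_nhds.2 fun ε hε => ?_
  filter_upwards [Metric.tendstoUniformlyOn_iff.1 hF (ε / 2) (by positivity)] with i hi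
  have hsup : ⨆ x : s, |F i x - f x| ≤ ε / 2 :=
    Real.iSup_le (fun x => by rw [abs_sub_comm, ← Real.dist_eq]; exact (hi x x.2).le)
      (by positivity)
  rw [Real.dist_eq, sub_zero, abs_of_nonneg (Real.iSup_nonneg fun _ => abs_nonneg _)]
  linarith

end UniformConvergence

section GeneralizedInverse

variable {h : ℝ → ℝ} {δ q : ℝ}

theorem sInf_superlevel_mem_Icc_and_abs_sub_le (hh1 : h 1 = 1)
    (hh : ∀ x ∈ Icc (0:ℝ) 1, |h x - x| ≤ δ) (hq : q ∈ Ioc (0:ℝ) 1) :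
    sInf {x ∈ Icc (0:ℝ) 1 | q ≤ h x} ∈ Icc (0:ℝ) 1 ∧
      |sInf {x ∈ Icc (0:ℝ) 1 | q ≤ h x} - q| ≤ δ := by
  set S := {x ∈ Icc (0:ℝ) 1 | q ≤ h x}
  have h1S : (1:ℝ) ∈ S := ⟨right_mem_Icc.2 zero_le_one, by rw [hh1]; exact hq.2⟩
  have hbdd : BddBelow S := ⟨0, fun x hx => hx.1.1⟩
  have hlower : q - δ ≤ sInf S := le_csInf ⟨1, h1S⟩ fun x hx => by
    linarith [hx.2, (abs_le.1 (hh x hx.1)).2]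
  have hupper : sInf S ≤ q + δ := by
    by_cases hqδ : q + δ ≤ 1
    · have hδ : 0 ≤ δ := (abs_nonneg _).trans (hh 0 (left_mem_Icc.2 zero_le_one))
      have hmem : q + δ ∈ Icc (0:ℝ) 1 := ⟨by linarith [hq.1], hqδ⟩
      exact csInf_le hbdd ⟨hmem, by linarith [(abs_le.1 (hh _ hmem)).1]⟩
    · linarith [csInf_le hbdd h1S]
  exact ⟨⟨le_csInf ⟨1, h1S⟩ fun x hx => hx.1.1, csInf_le hbdd h1S⟩,
    abs_le.2 ⟨by linarith, by linarith⟩⟩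

theorem sSup_zeroLevel_mem_Icc_and_le (hh0 : h 0 = 0)
    (hh : ∀ x ∈ Icc (0:ℝ) 1, |h x - x| ≤ δ) :
    sSup {x ∈ Icc (0:ℝ) 1 | h x = 0} ∈ Icc (0:ℝ) 1 ∧ sSup {x ∈ Icc (0:ℝ) 1 | h x = 0} ≤ δ := by
  set T := {x ∈ Icc (0:ℝ) 1 | h x = 0}
  have h0T : (0:ℝ) ∈ T := ⟨left_mem_Icc.2 zero_le_one, hh0⟩
  have hbdd : BddAbove T := ⟨1, fun x hx => hx.1.2⟩
  refine ⟨⟨le_csSup hbdd h0T, csSup_le ⟨0, h0T⟩ fun x hx => hx.1.2⟩, ?_⟩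
  refine csSup_le ⟨0, h0T⟩ fun x hx => ?_
  have := hh x hx.1
  rw [hx.2, zero_sub, abs_neg, abs_of_nonneg hx.1.1] at this
  exact this

end GeneralizedInverse

section Marginals

variable {d : ℕ}

theorem margVec_mem_cube (p : Fin d) {x : ℝ} (hx : x ∈ Icc (0:ℝ) 1) :
    margVec p x ∈ cube d := by
  intro q _
  by_cases hqp : q = p
  · subst hqp; simpa [margVec] using hx
  · simp [margVec, Function.update_of_ne hqp]

theorem measure_setOf_forall_le_margVec {μ : Measure (Fin d → ℝ)}
    (hμ : ∀ q, μ {y | 1 < y q} = 0) (p : Fin d) (x : ℝ) :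
    μ {y | ∀ q, y q ≤ margVec p x q} = μ {y | y p ≤ x} := by
  have hle_one : ∀ᵐ y ∂μ, ∀ q, y q ≤ 1 :=
    ae_all_iff.2 fun q => measure_eq_zero_iff_ae_notMem.1 (hμ q) |>.mono fun _ hy => not_lt.1 hy
  refine measure_congr (hle_one.mono fun y hy => ?_)
  change (∀ q, y q ≤ Function.update (fun _ => (1:ℝ)) p x q) = (y p ≤ x)
  rw [Function.forall_update_iff _ fun q b => y q ≤ b]
  exact propext ⟨And.left, fun hyp => ⟨hyp, fun q _ => hy q⟩⟩

theorem IsCopula.apply_margVec {C : (Fin d → ℝ) → ℝ} (hC : IsCopula d C) (p : Fin d) {x : ℝ}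
    (hx : x ∈ Icc (0:ℝ) 1) : C (margVec p x) = x := by
  obtain ⟨μ, hμ, hmarg, hC⟩ := hC
  have hnull : ∀ q, μ {y | 1 < y q} = 0 := fun q => by
    have hcompl : {y : Fin d → ℝ | 1 < y q} = {y | y q ≤ 1}ᶜ := by ext; simp
    rw [hcompl, prob_compl_eq_zero_iff (measurableSet_le (measurable_pi_apply q) measurable_const),
      hmarg q 1 (right_mem_Icc.2 zero_le_one), ENNReal.ofReal_one]
  rw [hC, measure_setOf_forall_le_margVec hnull, hmarg p x hx, ENNReal.toReal_ofReal hx.1]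

variable {ν : Measure (Fin d → ℝ)} {H : (Fin d → ℝ) → ℝ}

theorem cdf_margVec_zero (hν : ∀ p, ν {x | x p ≤ 0} = 0 ∧ ν {x | 1 < x p} = 0)
    (hH : ∀ u ∈ cube d, H u = (ν {x | ∀ p, x p ≤ u p}).toReal) (p : Fin d) :
    H (margVec p 0) = 0 := by
  rw [hH _ (margVec_mem_cube p (left_mem_Icc.2 zero_le_one)),
    measure_setOf_forall_le_margVec (fun q => (hν q).2), (hν p).1, ENNReal.toReal_zero]

theorem cdf_margVec_one [IsProbabilityMeasure ν]
    (hν : ∀ p, ν {x | x p ≤ 0} = 0 ∧ ν {x | 1 < x p} = 0)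
    (hH : ∀ u ∈ cube d, H u = (ν {x | ∀ p, x p ≤ u p}).toReal) (p : Fin d) :
    H (margVec p 1) = 1 := by
  have hcompl : {y : Fin d → ℝ | y p ≤ 1} = {y | 1 < y p}ᶜ := by ext; simp
  rw [hH _ (margVec_mem_cube p (right_mem_Icc.2 zero_le_one)),
    measure_setOf_forall_le_margVec (fun q => (hν q).2), hcompl,
    prob_compl_eq_one_iff (measurableSet_lt measurable_const (measurable_pi_apply p)) |>.2 (hν p).2,
    ENNReal.toReal_one]

end Marginals

theorem genInv_mem_Icc_and_abs_sub_le {d : ℕ} {C a : (Fin d → ℝ) → ℝ} (hC : IsCopula d C)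
    {δ : ℝ} (ha : ∀ v ∈ cube d, |a v| ≤ δ) {ν : Measure (Fin d → ℝ)} [IsProbabilityMeasure ν]
    (hν : ∀ p, ν {x | x p ≤ 0} = 0 ∧ ν {x | 1 < x p} = 0)
    (hνC : ∀ u ∈ cube d, C u + a u = (ν {x | ∀ p, x p ≤ u p}).toReal)
    {F : Fin d → ℝ → ℝ}
    (hF : ∀ p, ∀ q ∈ Ioc (0:ℝ) 1,
      F p q = sInf {x ∈ Icc (0:ℝ) 1 | q ≤ C (margVec p x) + a (margVec p x)})
    (hF0 : ∀ p, F p 0 = sSup {x ∈ Icc (0:ℝ) 1 | C (margVec p x) + a (margVec p x) = 0})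
    (p : Fin d) {q : ℝ} (hq : q ∈ Icc (0:ℝ) 1) :
    F p q ∈ Icc (0:ℝ) 1 ∧ |F p q - q| ≤ δ := by
  have hh : ∀ x ∈ Icc (0:ℝ) 1, |C (margVec p x) + a (margVec p x) - x| ≤ δ := fun x hx => by
    rw [hC.apply_margVec p hx, add_sub_cancel_left]
    exact ha _ (margVec_mem_cube p hx)
  rcases hq.1.eq_or_lt with rfl | hq0
  · obtain ⟨hmem, hle⟩ := sSup_zeroLevel_mem_Icc_and_le (cdf_margVec_zero hν hνC p) hh
    rw [hF0 p, sub_zero, abs_of_nonneg hmem.1]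
    exact ⟨hmem, hle⟩
  · rw [hF p q ⟨hq0, hq.2⟩]
    exact sInf_superlevel_mem_Icc_and_abs_sub_le (cdf_margVec_one hν hνC p) hh ⟨hq0, hq.2⟩

theorem eventually_genInv_mem_cube_and_dist_le {d : ℕ} {C : (Fin d → ℝ) → ℝ} (hC : IsCopula d C)
    {ι : Type*} {l : Filter ι} {a : ι → (Fin d → ℝ) → ℝ} (ha : TendstoUniformlyOn a 0 l (cube d))
    (hdom : ∀ i, ∃ ν : Measure (Fin d → ℝ), IsProbabilityMeasure ν ∧
      (∀ p : Fin d, ν {x | x p ≤ 0} = 0 ∧ ν {x | 1 < x p} = 0) ∧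
      (∀ u ∈ cube d, C u + a i u = (ν {x | ∀ p, x p ≤ u p}).toReal))
    {F : ι → Fin d → ℝ → ℝ}
    (hF : ∀ i p, ∀ q ∈ Ioc (0:ℝ) 1,
      F i p q = sInf {x ∈ Icc (0:ℝ) 1 | q ≤ C (margVec p x) + a i (margVec p x)})
    (hF0 : ∀ i p, F i p 0 = sSup {x ∈ Icc (0:ℝ) 1 | C (margVec p x) + a i (margVec p x) = 0})
    {δ : ℝ} (hδ : 0 < δ) :
    ∀ᶠ i in l, ∀ u ∈ cube d,
      (fun p => F i p (u p)) ∈ cube d ∧ dist (fun p => F i p (u p)) u ≤ δ := by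
  filter_upwards [Metric.tendstoUniformlyOn_iff.1 ha δ hδ] with i hi u hu
  obtain ⟨ν, hνprob, hν, hνC⟩ := hdom i
  have hFi := fun p => genInv_mem_Icc_and_abs_sub_le hC
    (fun v hv => by simpa using (hi v hv).le) hν hνC (hF i) (hF0 i) p (hu p trivial)
  exact ⟨fun p _ => (hFi p).1, (dist_pi_le_iff hδ.le).2 fun p => (hFi p).2⟩

theorem Psi_hadamard_differentiable_at_Csharp_general
    (d : ℕ) (C : (Fin d → ℝ) → ℝ) (hC : IsCopula d C)
    (t : ℕ → ℝ) (ht0 : ∀ n, t n ≠ 0) (htt : Tendsto t atTop (nhds 0))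
    (α : ℝ → (Fin d → ℝ) → ℝ) (αn : ℕ → ℝ → (Fin d → ℝ) → ℝ)
    (hunif : TendstoUniformlyOn (fun n q => αn n q.1 q.2) (fun q => α q.1 q.2) atTop
      (Icc (0:ℝ) 1 ×ˢ cube d))
    (hαuc : UniformContinuousOn (fun q : ℝ × (Fin d → ℝ) => α q.1 q.2)
      (Icc (0:ℝ) 1 ×ˢ cube d))
    (hαbdd : ∃ M, ∀ s ∈ Icc (0:ℝ) 1, ∀ u ∈ cube d, |α s u| ≤ M)
    -- `H = C + tₙαₙ^#(1,·)` is a distribution function on `[0,1]^d`,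
    -- marginals vanishing at `0`:
    (hdom : ∀ n, ∃ ν : Measure (Fin d → ℝ), IsProbabilityMeasure ν ∧
      (∀ p : Fin d, ν {x | x p ≤ 0} = 0 ∧ ν {x | 1 < x p} = 0) ∧
      (∀ u ∈ cube d, C u + t n * αn n 1 u = (ν {x | ∀ p, x p ≤ u p}).toReal))
    -- generalized inverses of the marginals of `H`:
    (Finv : ℕ → Fin d → ℝ → ℝ)
    (hFinv : ∀ n (p : Fin d), ∀ q ∈ Ioc (0:ℝ) 1,
      Finv n p q = sInf {x ∈ Icc (0:ℝ) 1 |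
        q ≤ C (margVec p x) + t n * αn n 1 (margVec p x)})
    (hFinv0 : ∀ n (p : Fin d), Finv n p 0 = sSup {x ∈ Icc (0:ℝ) 1 |
        C (margVec p x) + t n * αn n 1 (margVec p x) = 0}) :
    Tendsto (fun n => ⨆ q : (Icc (0:ℝ) 1 ×ˢ cube d : Set (ℝ × (Fin d → ℝ))),
      |(((q.1.1 * C (fun p => Finv n p (q.1.2 p)) + t n * αn n q.1.1 (fun p => Finv n p (q.1.2 p)))
          - q.1.1 * (C (fun p => Finv n p (q.1.2 p)) + t n * αn n 1 (fun p => Finv n p (q.1.2 p))))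
          / t n)
        - (α q.1.1 q.1.2 - q.1.1 * α 1 q.1.2)|) atTop (nhds 0) := by
  set S := Icc (0:ℝ) 1 ×ˢ cube d
  let G : ℕ → ℝ × (Fin d → ℝ) → ℝ × (Fin d → ℝ) := fun n q => (q.1, fun p => Finv n p (q.2 p))
  obtain ⟨M, hM⟩ := hαbdd
  have hperturb : TendstoUniformlyOn (fun n v => t n * αn n 1 v) 0 atTop (cube d) :=
    ((hunif.comp fun v => (1, v)).mono fun v hv => ⟨right_mem_Icc.2 zero_le_one, hv⟩)
      |>.const_mul_of_tendsto_zero (hM 1 (right_mem_Icc.2 zero_le_one)) htt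
  have hG : ∀ δ > 0, ∀ᶠ n in atTop, ∀ q ∈ S, G n q ∈ S ∧ dist (G n q) q ≤ δ := fun δ hδ =>
    (eventually_genInv_mem_cube_and_dist_le hC hperturb hdom hFinv hFinv0 hδ).mono
      fun n hn q hq => by
        obtain ⟨hmem, hdist⟩ := hn q.2 hq.2
        exact ⟨⟨hq.1, hmem⟩, by rw [Prod.dist_eq, dist_self]; exact max_le hδ.le hdist⟩
  have hGid : TendstoUniformlyOn G id atTop S := Metric.tendstoUniformlyOn_iff.2 fun ε hε =>
    (hG (ε / 2) (half_pos hε)).mono fun n hn q hq => by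
      rw [id, dist_comm]; exact (hn q hq).2.trans_lt (half_lt_self hε)
  have hcomp := hunif.comp_of_tendstoUniformlyOn_id hαuc hGid
    ((hG 1 one_pos).mono fun n hn q hq => (hn q hq).1)
  have hslice : ∀ q ∈ S, ((1:ℝ), q.2) ∈ S := fun q hq => ⟨right_mem_Icc.2 zero_le_one, hq.2⟩
  have hcomp1 := (hcomp.comp fun q : ℝ × (Fin d → ℝ) => ((1:ℝ), q.2)).mono hslice
  have hlim := (hcomp.sub (hcomp1.mul_left_of_abs_le (a := Prod.fst) (M := 1)
    fun q hq => (abs_of_nonneg hq.1.1).trans_le hq.1.2)).tendsto_iSup_abs_sub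
  have hquot : ∀ n (s c a b : ℝ), ((s * c + t n * a) - s * (c + t n * b)) / t n = a - s * b :=
    fun n s c a b => by field_simp [ht0 n]; ring
  refine hlim.congr fun n => iSup_congr fun q => ?_
  rw [hquot]
  rfl

/-- Hadamard differentiability of `Ψ` at `C^#`, full tangent space:
for any copula `C`, `tₙ → 0` (`tₙ ≠ 0`), bounded `αₙ^#` converging uniformly on
`[0,1]^{d+1}` to a uniformly continuous bounded `α^#`, with `C^# + tₙαₙ^#` in the domain
of `Ψ`, the difference quotients of `Ψ` converge uniformly to
`(s,u) ↦ α^#(s,u) − s·α^#(1,u)` (note `Ψ(C^#) = 0`). -/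
theorem Psi_hadamard_differentiable_at_Csharp
    (d : ℕ) (C : (Fin d → ℝ) → ℝ) (hC : IsCopula d C)
    (t : ℕ → ℝ) (ht0 : ∀ n, t n ≠ 0) (htt : Tendsto t atTop (nhds 0))
    (α : ℝ → (Fin d → ℝ) → ℝ) (αn : ℕ → ℝ → (Fin d → ℝ) → ℝ)
    (hbdd : ∀ n, ∃ M, ∀ s ∈ Icc (0:ℝ) 1, ∀ u ∈ cube d, |αn n s u| ≤ M)
    (hunif : TendstoUniformlyOn (fun n q => αn n q.1 q.2) (fun q => α q.1 q.2) atTop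
      (Icc (0:ℝ) 1 ×ˢ cube d))
    (hαuc : UniformContinuousOn (fun q : ℝ × (Fin d → ℝ) => α q.1 q.2)
      (Icc (0:ℝ) 1 ×ˢ cube d))
    (hαbdd : ∃ M, ∀ s ∈ Icc (0:ℝ) 1, ∀ u ∈ cube d, |α s u| ≤ M)
    -- `H = C + tₙαₙ^#(1,·)` is a distribution function on `[0,1]^d`,
    -- marginals vanishing at `0`:
    (hdom : ∀ n, ∃ ν : Measure (Fin d → ℝ), IsProbabilityMeasure ν ∧
      (∀ p : Fin d, ν {x | x p ≤ 0} = 0 ∧ ν {x | 1 < x p} = 0) ∧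
      (∀ u ∈ cube d, C u + t n * αn n 1 u = (ν {x | ∀ p, x p ≤ u p}).toReal))
    -- generalized inverses of the marginals of `H`:
    (Finv : ℕ → Fin d → ℝ → ℝ)
    (hFinv : ∀ n (p : Fin d), ∀ q ∈ Ioc (0:ℝ) 1,
      Finv n p q = sInf {x ∈ Icc (0:ℝ) 1 |
        q ≤ C (margVec p x) + t n * αn n 1 (margVec p x)})
    (hFinv0 : ∀ n (p : Fin d), Finv n p 0 = sSup {x ∈ Icc (0:ℝ) 1 |
        C (margVec p x) + t n * αn n 1 (margVec p x) = 0}) :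
    Tendsto (fun n => ⨆ q : (Icc (0:ℝ) 1 ×ˢ cube d : Set (ℝ × (Fin d → ℝ))),
      |(((q.1.1 * C (fun p => Finv n p (q.1.2 p)) + t n * αn n q.1.1 (fun p => Finv n p (q.1.2 p)))
          - q.1.1 * (C (fun p => Finv n p (q.1.2 p)) + t n * αn n 1 (fun p => Finv n p (q.1.2 p))))
          / t n)
        - (α q.1.1 q.1.2 - q.1.1 * α 1 q.1.2)|) atTop (nhds 0) :=
  Psi_hadamard_differentiable_at_Csharp_general d C hC t ht0 htt α αn hunif hαuc hαbdd hdom Finv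
    hFinv hFinv0
end

section
/- Let C be a d-dimensional copula whose partial derivatives ∂_pC exist and are continuous on {u : u_p ∈ (0,1)}, extended by 0 elsewhere. Let gₙ,ₚ : [0,1] → ℝ be bounded functions converging uniformly to continuous functions g_p with g_p(0) = g_p(1) = 0, and let tₙ → 0 with the maps x ↦ x + tₙgₙ,ₚ(x) taking values in [0,1]. Then sup_{x ∈ (0,1)^d} | tₙ⁻¹(C(x₁+tₙgₙ,₁(x₁),...,x_d+tₙgₙ,d(x_d)) − C(x)) − Σ_{p=1}^d ∂_pC(x)g_p(x_p) | → 0. -/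
open MeasureTheory Set Filter

/-- The open unit cube `(0,1)^d`. -/
def openCube (d : ℕ) : Set (Fin d → ℝ) := Set.univ.pi fun _ => Ioo 0 1

open Topology Uniformity

/-!
Telescoping along the coordinates and the mean value theorem in each coordinate write the
difference quotient as `∑ p, ∂_p C(ξ_p) gₙ,ₚ(x_p)`, with every `ξ_p` within `|tₙ| ‖gₙ‖` of `x`.
A copula is `1`-Lipschitz in each coordinate, so `|∂_p C| ≤ 1` and replacing `gₙ,ₚ` by `g_p`
costs little. The remaining error `g_p(x_p) (∂_p C(ξ_p) - ∂_p C(x))` is uniformly small because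
`u ↦ g_p(u_p) ∂_p C(u)` extends continuously by `0` to the faces `u_p ∈ {0, 1}` and is therefore
uniformly continuous on the compact cube.
-/

theorem exists_mem_uIcc_sub_eq_mul {φ φ' : ℝ → ℝ} {a b : ℝ} (hφ : ContinuousOn φ (uIcc a b))
    (hφ' : ∀ c ∈ uIoo a b, HasDerivAt φ (φ' c) c) :
    ∃ c ∈ uIcc a b, φ b - φ a = φ' c * (b - a) := by
  wlog hab : a ≤ b generalizing a b
  · obtain ⟨c, hc, h⟩ := this (uIcc_comm a b ▸ hφ) (uIoo_comm a b ▸ hφ') (le_of_not_ge hab)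
    exact ⟨c, uIcc_comm a b ▸ hc, by linear_combination -h⟩
  rcases hab.eq_or_lt with rfl | hlt
  · exact ⟨a, left_mem_uIcc, by simp⟩
  rw [uIcc_of_le hab] at hφ ⊢
  rw [uIoo_of_le hab] at hφ'
  obtain ⟨c, hc, h⟩ := exists_hasDerivAt_eq_slope φ φ' hlt hφ hφ'
  exact ⟨c, Ioo_subset_Icc_self hc, by rw [h, div_mul_cancel₀ _ (sub_ne_zero.2 hlt.ne')]⟩

section Staircase

variable {d : ℕ} {α : Type*}

def staircase (x y : Fin d → α) (k : ℕ) : Fin d → α :=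
  fun q => if (q : ℕ) < k then y q else x q

@[simp]
theorem staircase_zero (x y : Fin d → α) : staircase x y 0 = x :=
  funext fun _ => if_neg (Nat.not_lt_zero _)

@[simp]
theorem staircase_self (x y : Fin d → α) : staircase x y d = y :=
  funext fun q => if_pos q.isLt

theorem staircase_apply_of_le (x y : Fin d → α) {k : ℕ} {q : Fin d} (hk : k ≤ q) :
    staircase x y k q = x q :=
  if_neg (not_lt.2 hk)

theorem staircase_succ (x y : Fin d → α) (p : Fin d) :
    staircase x y (p + 1) = Function.update (staircase x y p) p (y p) := by
  funext q
  rcases eq_or_ne q p with rfl | hq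
  · simp [staircase]
  · have : (q : ℕ) < p + 1 ↔ (q : ℕ) < p := by omega
    simp [staircase, hq, this]

theorem staircase_mem_pi {S : Fin d → Set α} {x y : Fin d → α} (hx : x ∈ univ.pi S)
    (hy : y ∈ univ.pi S) (k : ℕ) : staircase x y k ∈ univ.pi S := fun q _ => by
  unfold staircase
  split_ifs
  exacts [hy q (mem_univ q), hx q (mem_univ q)]

theorem sub_eq_sum_staircase {β : Type*} [AddCommGroup β] (f : (Fin d → α) → β)
    (x y : Fin d → α) :
    f y - f x = ∑ p : Fin d, (f (staircase x y (p + 1)) - f (staircase x y p)) := by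
  rw [Fin.sum_univ_eq_sum_range (fun k => f (staircase x y (k + 1)) - f (staircase x y k)),
    Finset.sum_range_sub (fun k => f (staircase x y k)), staircase_self, staircase_zero]

end Staircase

theorem exists_sub_eq_sum_mul_of_forall_update {d : ℕ} {f : (Fin d → ℝ) → ℝ}
    {D : Fin d → (Fin d → ℝ) → ℝ} {S : Fin d → Set ℝ}
    (hf : ∀ p, ∀ u ∈ univ.pi S, ∀ s ∈ S p, ∃ c ∈ uIcc (u p) s,
      f (Function.update u p s) - f u = D p (Function.update u p c) * (s - u p))
    {x y : Fin d → ℝ} (hx : x ∈ univ.pi S) (hy : y ∈ univ.pi S) :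
    ∃ ξ : Fin d → Fin d → ℝ, (∀ p q, ξ p q ∈ uIcc (x q) (y q)) ∧
      f y - f x = ∑ p, D p (ξ p) * (y p - x p) := by
  have hstep : ∀ p, ∃ c ∈ uIcc (x p) (y p), f (staircase x y (p + 1)) - f (staircase x y p)
      = D p (Function.update (staircase x y p) p c) * (y p - x p) := fun p => by
    simpa [staircase_succ, staircase_apply_of_le x y le_rfl] using
      hf p _ (staircase_mem_pi hx hy p) (y p) (hy p (mem_univ p))
  choose c hc hfc using hstep
  refine ⟨fun p => Function.update (staircase x y p) p (c p), fun p q => ?_, ?_⟩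
  · rcases eq_or_ne q p with rfl | hq
    · simpa using hc q
    · simp only [Function.update_of_ne hq, staircase]
      split_ifs
      exacts [right_mem_uIcc, left_mem_uIcc]
  · rw [sub_eq_sum_staircase f x y]
    exact Finset.sum_congr rfl fun p _ => hfc p

theorem UniformContinuousOn.tendsto_sub_zero {E : Type*} [SeminormedAddCommGroup E]
    {f : E → ℝ} {s : Set E} (hf : UniformContinuousOn f s) {ι : Type*} {l : Filter ι}
    {u v : ι → E} (hu : ∀ᶠ i in l, u i ∈ s) (hv : ∀ᶠ i in l, v i ∈ s)
    (huv : Tendsto (fun i => u i - v i) l (𝓝 0)) :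
    Tendsto (fun i => f (u i) - f (v i)) l (𝓝 0) := by
  have hpair : Tendsto (fun i => (u i, v i)) l (𝓤 E ⊓ 𝓟 (s ×ˢ s)) := by
    refine tendsto_inf.2 ⟨tendsto_uniformity_iff_dist_tendsto_zero.2 ?_,
      tendsto_principal.2 (hu.and hv)⟩
    simpa [dist_eq_norm] using huv.norm
  have := tendsto_uniformity_iff_dist_tendsto_zero.1 (Tendsto.comp hf hpair)
  simp only [Function.comp_apply, Real.dist_eq] at this
  exact (tendsto_zero_iff_abs_tendsto_zero _).2 this

section Weighted

variable {d : ℕ} {p : Fin d} {w : ℝ → ℝ} {F : (Fin d → ℝ) → ℝ} {B : ℝ}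

theorem continuousOn_mul_of_eq_zero_of_bounded (hw : ContinuousOn w (Icc 0 1))
    (hw0 : w 0 = 0) (hw1 : w 1 = 0) (hF : ContinuousOn F {u | u ∈ cube d ∧ u p ∈ Ioo 0 1})
    (hFB : ∀ u ∈ cube d, |F u| ≤ B) :
    ContinuousOn (fun u => w (u p) * F u) (cube d) := by
  have hwp : ContinuousOn (fun u : Fin d → ℝ => w (u p)) (cube d) :=
    hw.comp (continuous_apply p).continuousOn fun u hu => hu p (mem_univ p)
  intro u hu
  by_cases hup : u p ∈ Ioo 0 1
  · refine ((hwp.mono inter_subset_left).mul hF |>.continuousWithinAt ⟨hu, hup⟩)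
      |>.mono_of_mem_nhdsWithin ?_
    exact inter_mem_nhdsWithin _ (isOpen_Ioo.preimage (continuous_apply p) |>.mem_nhds hup)
  · have hwu : w (u p) = 0 := by
      rcases (hu p (mem_univ p)).1.eq_or_lt with h | h
      · rw [← h, hw0]
      · rw [(hu p (mem_univ p)).2.eq_or_lt.resolve_right fun h' => hup ⟨h, h'⟩, hw1]
    have hbdd : IsBoundedUnder (· ≤ ·) (𝓝[cube d] u) (norm ∘ F) :=
      isBoundedUnder_of_eventually_le (a := B) <|
        eventually_nhdsWithin_of_forall fun v hv => hFB v hv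
    have hwpu := hwp u hu
    rw [ContinuousWithinAt, hwu] at hwpu
    simpa [ContinuousWithinAt, hwu] using hwpu.zero_mul_isBoundedUnder_le hbdd

theorem tendsto_mul_sub_of_eq_zero_of_bounded (hw : ContinuousOn w (Icc 0 1))
    (hw0 : w 0 = 0) (hw1 : w 1 = 0) (hF : ContinuousOn F {u | u ∈ cube d ∧ u p ∈ Ioo 0 1})
    (hFB : ∀ u ∈ cube d, |F u| ≤ B) {ι : Type*} {l : Filter ι} {u v : ι → Fin d → ℝ}
    (hu : ∀ᶠ i in l, u i ∈ cube d) (hv : ∀ᶠ i in l, v i ∈ cube d)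
    (huv : Tendsto (fun i => u i - v i) l (𝓝 0)) :
    Tendsto (fun i => w (v i p) * (F (u i) - F (v i))) l (𝓝 0) := by
  have hcube : IsCompact (cube d) := isCompact_univ_pi fun _ => isCompact_Icc
  have hwp : ContinuousOn (fun u : Fin d → ℝ => w (u p)) (cube d) :=
    hw.comp (continuous_apply p).continuousOn fun u hu => hu p (mem_univ p)
  have hwF := hcube.uniformContinuousOn_of_continuous
    (continuousOn_mul_of_eq_zero_of_bounded hw hw0 hw1 hF hFB)
  have hbdd : IsBoundedUnder (· ≤ ·) l (norm ∘ fun i => F (u i)) :=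
    isBoundedUnder_of_eventually_le (a := B) <| hu.mono fun i hi => hFB _ hi
  -- `w (v p) (F u - F v) = (w (v p) - w (u p)) F u + (w (u p) F u - w (v p) F v)`
  have hsplit := ((hcube.uniformContinuousOn_of_continuous hwp).tendsto_sub_zero hv hu
    (by simpa using huv.neg)).zero_mul_isBoundedUnder_le hbdd |>.add
    (hwF.tendsto_sub_zero hu hv huv)
  simpa using hsplit.congr fun i => by ring

end Weighted

theorem tendsto_iSup_abs_of_tendsto_prod_principal {ι α : Type*} {l : Filter ι}
    {E : ι → α → ℝ} {s : Set α}
    (hE : Tendsto (fun q : ι × α => E q.1 q.2) (l ×ˢ 𝓟 s) (𝓝 0)) :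
    Tendsto (fun i => ⨆ x : s, |E i x|) l (𝓝 0) := by
  rw [Metric.tendsto_nhds] at hE ⊢
  intro ε hε
  filter_upwards [eventually_prod_principal_iff.1 (hE (ε / 2) (half_pos hε))] with i hi
  have hle : ⨆ x : s, |E i x| ≤ ε / 2 :=
    Real.iSup_le (fun x => by simpa using (hi x x.2).le) (half_pos hε).le
  rw [Real.dist_eq, sub_zero, abs_of_nonneg (Real.iSup_nonneg fun _ => abs_nonneg _)]
  linarith

theorem TendstoUniformlyOn.tendsto_prod_principal_sub {ι α : Type*} {l : Filter ι}
    {F : ι → α → ℝ} {f : α → ℝ} {s : Set α} (h : TendstoUniformlyOn F f l s) :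
    Tendsto (fun q : ι × α => F q.1 q.2 - f q.2) (l ×ˢ 𝓟 s) (𝓝 0) := by
  have := tendsto_uniformity_iff_dist_tendsto_zero.1 (tendstoUniformlyOn_iff_tendsto.1 h)
  simp only [Real.dist_eq, abs_sub_comm] at this
  exact (tendsto_zero_iff_abs_tendsto_zero _).2 this

theorem tendsto_mul_of_tendsto_sub_of_continuousOn {ι : Type*} {l : Filter ι} {τ γ z : ι → ℝ}
    {w : ℝ → ℝ} (hw : ContinuousOn w (Icc 0 1)) (hz : ∀ᶠ i in l, z i ∈ Icc 0 1)
    (hτ : Tendsto τ l (𝓝 0)) (hγ : Tendsto (fun i => γ i - w (z i)) l (𝓝 0)) :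
    Tendsto (fun i => τ i * γ i) l (𝓝 0) := by
  obtain ⟨M, hM⟩ := isCompact_Icc.exists_bound_of_continuousOn hw
  have hbdd : IsBoundedUnder (· ≤ ·) l (norm ∘ fun i => w (z i)) :=
    isBoundedUnder_of_eventually_le (a := M) (hz.mono fun i hi => hM _ hi)
  simpa using ((hτ.mul hγ).add (hτ.zero_mul_isBoundedUnder_le hbdd)).congr fun i => by ring

theorem openCube_subset_cube (d : ℕ) : openCube d ⊆ cube d :=
  pi_mono fun _ _ => Ioo_subset_Icc_self

namespace IsCopula

variable {d : ℕ} {C : (Fin d → ℝ) → ℝ} {D : Fin d → (Fin d → ℝ) → ℝ}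

theorem update_sub_update_mem_Icc (hC : IsCopula d C) (u : Fin d → ℝ) (p : Fin d) {s s' : ℝ}
    (hs : s ∈ Icc (0:ℝ) 1) (hs' : s' ∈ Icc (0:ℝ) 1) (hss' : s ≤ s') :
    C (Function.update u p s') - C (Function.update u p s) ∈ Icc 0 (s' - s) := by
  obtain ⟨μ, _, hmarg, hCdef⟩ := hC
  have hC : ∀ w, C w = μ.real (Iic w) := hCdef
  have hmarg : ∀ r ∈ Icc (0:ℝ) 1, μ.real {x | x p ≤ r} = r := fun r hr => by
    rw [measureReal_def, hmarg p r hr, ENNReal.toReal_ofReal hr.1]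
  have hsub : Iic (Function.update u p s) ⊆ Iic (Function.update u p s') :=
    Iic_subset_Iic.mpr (update_le_update_iff'.mpr hss')
  have hdiff : Iic (Function.update u p s') \ Iic (Function.update u p s) ⊆
      {x | x p ≤ s'} \ {x | x p ≤ s} := by
    rintro x ⟨hx', hx⟩
    refine ⟨by simpa using hx' p, fun hxp => hx fun q => ?_⟩
    rcases eq_or_ne q p with rfl | hq
    · simpa using hxp
    · simpa [hq] using hx' q
  rw [hC, hC, ← measureReal_sdiff hsub measurableSet_Iic]
  refine ⟨measureReal_nonneg, (measureReal_mono hdiff).trans_eq ?_⟩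
  have hsub' : {x : Fin d → ℝ | x p ≤ s} ⊆ {x | x p ≤ s'} := fun x (hx : x p ≤ s) => hx.trans hss'
  rw [measureReal_sdiff hsub' (measurableSet_le (measurable_pi_apply p) measurable_const),
    hmarg s' hs', hmarg s hs]

theorem lipschitzOnWith_update (hC : IsCopula d C) (u : Fin d → ℝ) (p : Fin d) :
    LipschitzOnWith 1 (fun s => C (Function.update u p s)) (Icc 0 1) := by
  refine LipschitzOnWith.of_dist_le_mul fun s hs s' hs' => ?_
  rw [NNReal.coe_one, one_mul, Real.dist_eq, Real.dist_eq]
  rcases le_total s s' with h | h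
  · have := hC.update_sub_update_mem_Icc u p hs hs' h
    rw [abs_sub_comm, abs_of_nonneg this.1, abs_sub_comm, abs_of_nonneg (sub_nonneg.2 h)]
    exact this.2
  · have := hC.update_sub_update_mem_Icc u p hs' hs h
    rw [abs_of_nonneg this.1, abs_of_nonneg (sub_nonneg.2 h)]
    exact this.2

theorem abs_le_one_of_hasDerivWithinAt (hC : IsCopula d C) {u : Fin d → ℝ} {p : Fin d} {a : ℝ}
    (hup : u p ∈ Ioo (0:ℝ) 1)
    (ha : HasDerivWithinAt (fun s => C (Function.update u p s)) a (Icc 0 1) (u p)) :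
    |a| ≤ 1 := by
  have hnhds : Icc (0:ℝ) 1 ∈ 𝓝 (u p) := Icc_mem_nhds hup.1 hup.2
  simpa using (ha.hasDerivAt hnhds).le_of_lipschitzOn hnhds (hC.lipschitzOnWith_update u p)

theorem exists_sub_eq_sum_mul (hC : IsCopula d C)
    (hD : ∀ p : Fin d, ∀ u ∈ cube d, u p ∈ Ioo (0:ℝ) 1 →
      HasDerivWithinAt (fun s => C (Function.update u p s)) (D p u) (Icc (0:ℝ) 1) (u p))
    {x y : Fin d → ℝ} (hx : x ∈ cube d) (hy : y ∈ cube d) :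
    ∃ ξ : Fin d → Fin d → ℝ, (∀ p q, ξ p q ∈ uIcc (x q) (y q)) ∧
      C y - C x = ∑ p, D p (ξ p) * (y p - x p) := by
  refine exists_sub_eq_sum_mul_of_forall_update (fun p u hu s hs => ?_) hx hy
  have hup := hu p (mem_univ p)
  have hderiv : ∀ c ∈ uIoo (u p) s,
      HasDerivAt (fun s => C (Function.update u p s)) (D p (Function.update u p c)) c := by
    intro c hc
    have hc01 : c ∈ Ioo (0:ℝ) 1 :=
      ⟨(le_inf hup.1 hs.1).trans_lt hc.1, hc.2.trans_le (sup_le hup.2 hs.2)⟩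
    have hcube : Function.update u p c ∈ cube d :=
      (update_mem_pi_iff_of_mem hu).2 fun _ => Ioo_subset_Icc_self hc01
    have := hD p _ hcube (by simpa using hc01)
    simp only [Function.update_idem, Function.update_self] at this
    exact this.hasDerivAt (Icc_mem_nhds hc01.1 hc01.2)
  obtain ⟨c, hc, h⟩ := exists_mem_uIcc_sub_eq_mul
    ((hC.lipschitzOnWith_update u p).continuousOn.mono (uIcc_subset_Icc hup hs)) hderiv
  exact ⟨c, hc, by simpa using h⟩

theorem abs_le_one_of_eq_zero_of_hasDerivWithinAt (hC : IsCopula d C)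
    (hDderiv : ∀ p : Fin d, ∀ u ∈ cube d, u p ∈ Ioo (0:ℝ) 1 →
      HasDerivWithinAt (fun s => C (Function.update u p s)) (D p u) (Icc (0:ℝ) 1) (u p))
    (hDbdry : ∀ p : Fin d, ∀ u, (u p = 0 ∨ u p = 1) → D p u = 0) (p : Fin d) (u : Fin d → ℝ)
    (hu : u ∈ cube d) : |D p u| ≤ 1 := by
  by_cases hup : u p ∈ Ioo 0 1
  · exact hC.abs_le_one_of_hasDerivWithinAt hup (hDderiv p u hu hup)
  · have hedge : u p = 0 ∨ u p = 1 := by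
      have := hu p (mem_univ p)
      by_contra! h
      exact hup ⟨this.1.lt_of_ne' h.1, this.2.lt_of_ne h.2⟩
    simp [hDbdry p u hedge]

theorem tendsto_taylor_remainder (hC : IsCopula d C)
    (hDderiv : ∀ p : Fin d, ∀ u ∈ cube d, u p ∈ Ioo (0:ℝ) 1 →
      HasDerivWithinAt (fun s => C (Function.update u p s)) (D p u) (Icc (0:ℝ) 1) (u p))
    (hDcont : ∀ p : Fin d, ContinuousOn (D p) {u | u ∈ cube d ∧ u p ∈ Ioo (0:ℝ) 1})
    (hDbdry : ∀ p : Fin d, ∀ u, (u p = 0 ∨ u p = 1) → D p u = 0)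
    {w : Fin d → ℝ → ℝ} (hw : ∀ p, ContinuousOn (w p) (Icc 0 1)) (hw0 : ∀ p, w p 0 = 0)
    (hw1 : ∀ p, w p 1 = 0) {ι : Type*} {l : Filter ι} {x : ι → Fin d → ℝ} {τ : ι → ℝ}
    {γ : ι → Fin d → ℝ} (hx : ∀ᶠ i in l, x i ∈ cube d)
    (hy : ∀ᶠ i in l, (fun p => x i p + τ i * γ i p) ∈ cube d) (hτ0 : ∀ᶠ i in l, τ i ≠ 0)
    (hτ : Tendsto τ l (𝓝 0)) (hγ : ∀ p, Tendsto (fun i => γ i p - w p (x i p)) l (𝓝 0)) :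
    Tendsto (fun i => (τ i)⁻¹ * (C (fun p => x i p + τ i * γ i p) - C (x i))
      - ∑ p, D p (x i) * w p (x i p)) l (𝓝 0) := by
  have hDle := hC.abs_le_one_of_eq_zero_of_hasDerivWithinAt hDderiv hDbdry
  have hmvt : ∀ i, ∃ ξ : Fin d → Fin d → ℝ, x i ∈ cube d →
      (fun p => x i p + τ i * γ i p) ∈ cube d →
      (∀ p q, ξ p q ∈ uIcc (x i q) (x i q + τ i * γ i q)) ∧
      C (fun p => x i p + τ i * γ i p) - C (x i) = ∑ p, D p (ξ p) * (τ i * γ i p) := fun i => by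
    by_cases h : x i ∈ cube d ∧ (fun p => x i p + τ i * γ i p) ∈ cube d
    · obtain ⟨ξ, hξ, hmvt⟩ := hC.exists_sub_eq_sum_mul hDderiv h.1 h.2
      exact ⟨ξ, fun _ _ => ⟨hξ, by simpa using hmvt⟩⟩
    · exact ⟨0, fun h1 h2 => absurd ⟨h1, h2⟩ h⟩
  choose ξ hξ using hmvt
  have hξ' : ∀ᶠ i in l, _ := (hx.and hy).mono fun i hi => hξ i hi.1 hi.2
  have hstep : ∀ q, Tendsto (fun i => τ i * γ i q) l (𝓝 0) := fun q =>
    tendsto_mul_of_tendsto_sub_of_continuousOn (hw q) (hx.mono fun i hi => hi q (mem_univ q))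
      hτ (hγ q)
  have hξcube : ∀ p, ∀ᶠ i in l, ξ i p ∈ cube d := fun p =>
    (hx.and (hy.and hξ')).mono fun i ⟨hxi, hyi, hξi, _⟩ q _ =>
      uIcc_subset_Icc (hxi q (mem_univ q)) (hyi q (mem_univ q)) (hξi p q)
  have hξx : ∀ p, Tendsto (fun i => ξ i p - x i) l (𝓝 0) := fun p =>
    tendsto_pi_nhds.2 fun q => squeeze_zero_norm' (a := fun i => |τ i * γ i q|)
      (hξ'.mono fun i hi => (abs_sub_left_of_mem_uIcc (hi.1 p q)).trans_eq (by simp))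
      (by simpa using (hstep q).abs)
  have hlim : Tendsto (fun i => ∑ p, (D p (ξ i p) * (γ i p - w p (x i p))
      + w p (x i p) * (D p (ξ i p) - D p (x i)))) l (𝓝 0) := by
    simpa using tendsto_finsetSum Finset.univ fun p _ =>
      (isBoundedUnder_le_mul_tendsto_zero (f := fun i => D p (ξ i p))
        (isBoundedUnder_of_eventually_le (a := 1) ((hξcube p).mono fun i => hDle p _))
        (hγ p)).add
      (tendsto_mul_sub_of_eq_zero_of_bounded (hw p) (hw0 p) (hw1 p) (hDcont p) (hDle p)
        (hξcube p) hx (hξx p))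
  refine hlim.congr' ((hξ'.and hτ0).mono fun i ⟨⟨_, hCi⟩, hτi⟩ => ?_)
  dsimp only
  rw [hCi, Finset.mul_sum, ← Finset.sum_sub_distrib]
  refine Finset.sum_congr rfl fun p _ => ?_
  field_simp
  ring

end IsCopula

theorem copula_uniform_taylor_expansion_general
    (d : ℕ) (C : (Fin d → ℝ) → ℝ) (hC : IsCopula d C)
    (D : Fin d → (Fin d → ℝ) → ℝ)
    (hDderiv : ∀ p : Fin d, ∀ u ∈ cube d, u p ∈ Ioo (0:ℝ) 1 →
      HasDerivWithinAt (fun s => C (Function.update u p s)) (D p u) (Icc (0:ℝ) 1) (u p))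
    (hDcont : ∀ p : Fin d, ContinuousOn (D p) {u | u ∈ cube d ∧ u p ∈ Ioo (0:ℝ) 1})
    (hDbdry : ∀ p : Fin d, ∀ u, (u p = 0 ∨ u p = 1) → D p u = 0)
    (t : ℕ → ℝ) (ht0 : ∀ n, t n ≠ 0) (htt : Tendsto t atTop (nhds 0))
    (g : ℕ → Fin d → ℝ → ℝ) (glim : Fin d → ℝ → ℝ)
    (hgunif : ∀ p : Fin d, TendstoUniformlyOn (fun n => g n p) (glim p) atTop (Icc 0 1))
    (hgcont : ∀ p : Fin d, ContinuousOn (glim p) (Icc 0 1))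
    (hg0 : ∀ p : Fin d, glim p 0 = 0) (hg1 : ∀ p : Fin d, glim p 1 = 0)
    (hrange : ∀ n (p : Fin d), ∀ x ∈ Icc (0:ℝ) 1, x + t n * g n p x ∈ Icc (0:ℝ) 1) :
    Tendsto (fun n => ⨆ x : openCube d,
      |(t n)⁻¹ * (C (fun p => x.1 p + t n * g n p (x.1 p)) - C x.1)
        - ∑ p, D p x.1 * glim p (x.1 p)|) atTop (nhds 0) := by
  have hcube : ∀ᶠ q : ℕ × (Fin d → ℝ) in atTop ×ˢ 𝓟 (openCube d), q.2 ∈ cube d :=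
    eventually_prod_principal_iff.2 <|
      Eventually.of_forall fun _ => openCube_subset_cube d
  have hshift : ∀ᶠ q : ℕ × (Fin d → ℝ) in atTop ×ˢ 𝓟 (openCube d),
      (fun p => q.2 p + t q.1 * g q.1 p (q.2 p)) ∈ cube d :=
    hcube.mono fun q hq p _ => hrange q.1 p _ (hq p (mem_univ p))
  have hconv : ∀ p, Tendsto (fun q : ℕ × (Fin d → ℝ) => g q.1 p (q.2 p) - glim p (q.2 p))
      (atTop ×ˢ 𝓟 (openCube d)) (𝓝 0) := fun p =>
    (((hgunif p).comp fun x : Fin d → ℝ => x p).mono fun x (hx : x ∈ openCube d) =>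
      Ioo_subset_Icc_self (hx p (mem_univ p))).tendsto_prod_principal_sub
  apply tendsto_iSup_abs_of_tendsto_prod_principal (E := fun n (x : Fin d → ℝ) =>
    (t n)⁻¹ * (C (fun p => x p + t n * g n p (x p)) - C x) - ∑ p, D p x * glim p (x p))
  exact hC.tendsto_taylor_remainder hDderiv hDcont hDbdry hgcont hg0 hg1 hcube hshift
      (Eventually.of_forall fun q => ht0 q.1) (htt.comp tendsto_fst) hconv

/-- uniform first-order Taylor expansion of `C` along the perturbations
`x ↦ (x_p + tₙ gₙ,ₚ(x_p))_p`, uniformly over `(0,1)^d`. -/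
theorem copula_uniform_taylor_expansion
    (d : ℕ) (C : (Fin d → ℝ) → ℝ) (hC : IsCopula d C)
    (D : Fin d → (Fin d → ℝ) → ℝ)
    (hDderiv : ∀ p : Fin d, ∀ u ∈ cube d, u p ∈ Ioo (0:ℝ) 1 →
      HasDerivWithinAt (fun s => C (Function.update u p s)) (D p u) (Icc (0:ℝ) 1) (u p))
    (hDcont : ∀ p : Fin d, ContinuousOn (D p) {u | u ∈ cube d ∧ u p ∈ Ioo (0:ℝ) 1})
    (hDbdry : ∀ p : Fin d, ∀ u, (u p = 0 ∨ u p = 1) → D p u = 0)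
    (t : ℕ → ℝ) (ht0 : ∀ n, t n ≠ 0) (htt : Tendsto t atTop (nhds 0))
    (g : ℕ → Fin d → ℝ → ℝ) (glim : Fin d → ℝ → ℝ)
    (hgb : ∀ n (p : Fin d), ∃ M, ∀ x ∈ Icc (0:ℝ) 1, |g n p x| ≤ M)
    (hgunif : ∀ p : Fin d, TendstoUniformlyOn (fun n => g n p) (glim p) atTop (Icc 0 1))
    (hgcont : ∀ p : Fin d, ContinuousOn (glim p) (Icc 0 1))
    (hg0 : ∀ p : Fin d, glim p 0 = 0) (hg1 : ∀ p : Fin d, glim p 1 = 0)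
    (hrange : ∀ n (p : Fin d), ∀ x ∈ Icc (0:ℝ) 1, x + t n * g n p x ∈ Icc (0:ℝ) 1) :
    Tendsto (fun n => ⨆ x : openCube d,
      |(t n)⁻¹ * (C (fun p => x.1 p + t n * g n p (x.1 p)) - C x.1)
        - ∑ p, D p x.1 * glim p (x.1 p)|) atTop (nhds 0) :=
  copula_uniform_taylor_expansion_general d C hC D hDderiv hDcont hDbdry t ht0 htt g glim hgunif
    hgcont hg0 hg1 hrange
end
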